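/- arXiv:1509.06461 — 2 statements merged into one kernel-verified Lean document; each statement's English description precedes it below -/
import Mathlib

section
/- Let m ≥ 2 and let ε : Fin m → ℝ satisfy ∑ a, ε a = 0 and (1/m) * ∑ a, (ε a)^2 = C for some C > 0. Then the maximum of ε over Fin m is at least √(C/(m-1)). -/
open Finset

theorem max_error_lower_bound (m : ℕ) (hm : 2 ≤ m) (C : ℝ) (hC : 0 < C)
    (ε : Fin m → ℝ) (hsum : ∑ a, ε a = 0)
    (hvar : (1 / (m : ℝ)) * ∑ a, (ε a) ^ 2 = C) :
    Real.sqrt (C / ((m : ℝ) - 1)) ≤ ⨆ a, ε a := by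
  have hm0 : 0 < m := by omega
  haveI : Nonempty (Fin m) := ⟨⟨0, hm0⟩⟩
  have hmR : (2 : ℝ) ≤ (m : ℝ) := by exact_mod_cast hm
  set M := ⨆ a, ε a with hMdef
  have hbdd : BddAbove (Set.range ε) := (Set.finite_range ε).bddAbove
  have hle : ∀ a, ε a ≤ M := fun a => le_ciSup hbdd a
  -- M ≥ 0
  have hsum_le : (0 : ℝ) ≤ (m : ℝ) * M := by
    calc (0 : ℝ) = ∑ a, ε a := hsum.symm
    _ ≤ ∑ _a : Fin m, M := Finset.sum_le_sum fun a _ => hle a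
    _ = (m : ℝ) * M := by simp [mul_comm]
  have hM0 : 0 ≤ M := nonneg_of_mul_nonneg_right hsum_le (by positivity)
  -- lower bound on each ε a
  have hlow : ∀ a, -(((m : ℝ) - 1) * M) ≤ ε a := by
    intro a
    have h1 : ε a + ∑ b ∈ Finset.univ.erase a, ε b = 0 := by
      rw [Finset.add_sum_erase _ _ (Finset.mem_univ a)]; exact hsum
    have h2 : ∑ b ∈ Finset.univ.erase a, ε b ≤ ((m : ℝ) - 1) * M := by
      calc ∑ b ∈ Finset.univ.erase a, ε b
          ≤ ∑ _b ∈ Finset.univ.erase a, M := Finset.sum_le_sum fun b _ => hle b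
        _ = ((Finset.univ.erase a).card : ℝ) * M := by simp [mul_comm]
        _ = ((m : ℝ) - 1) * M := by
            rw [Finset.card_erase_of_mem (Finset.mem_univ a)]
            simp
            rw [Nat.cast_sub hm0]
            simp
    linarith
  -- key pointwise inequality
  have key : ∀ a, (ε a)^2 ≤ ((m : ℝ) - 1) * M^2 - ((m : ℝ) - 2) * M * ε a := by
    intro a
    have h1 := hle a
    have h2 := hlow a
    nlinarith [mul_nonneg (sub_nonneg.2 h1) (by linarith : (0:ℝ) ≤ ε a + ((m:ℝ)-1)*M)]
  have hsumsq : ∑ a, (ε a)^2 ≤ (m : ℝ) * (((m : ℝ) - 1) * M^2) := by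
    calc ∑ a, (ε a)^2
        ≤ ∑ a, (((m : ℝ) - 1) * M^2 - ((m : ℝ) - 2) * M * ε a) :=
          Finset.sum_le_sum fun a _ => key a
      _ = (m : ℝ) * (((m : ℝ) - 1) * M^2) - ((m : ℝ) - 2) * M * ∑ a, ε a := by
          rw [Finset.sum_sub_distrib]
          simp [mul_comm]
          rw [Finset.sum_mul]
      _ = (m : ℝ) * (((m : ℝ) - 1) * M^2) := by rw [hsum]; ring
  have hCle : C ≤ ((m : ℝ) - 1) * M^2 := by
    have hmpos : (0 : ℝ) < (m : ℝ) := by positivity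
    rw [← hvar]
    have h3 : (1/(m:ℝ)) * ((m:ℝ) * (((m:ℝ)-1)*M^2)) = ((m:ℝ)-1)*M^2 := by
      field_simp
    have h4 := mul_le_mul_of_nonneg_left hsumsq (by positivity : (0:ℝ) ≤ 1/(m:ℝ))
    linarith
  have hm1 : (0 : ℝ) < (m : ℝ) - 1 := by linarith
  have hdiv : C / ((m : ℝ) - 1) ≤ M^2 := by
    rw [div_le_iff₀ hm1]; linarith [hCle]
  calc Real.sqrt (C / ((m : ℝ) - 1)) ≤ Real.sqrt (M^2) := Real.sqrt_le_sqrt hdiv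
    _ = M := by rw [Real.sqrt_sq hM0]
end

section
/- For every m ≥ 2 and C > 0, the lower bound √(C/(m-1)) on the maximum error is tight: there exists ε : Fin m → ℝ with ∑ a, ε a = 0, (1/m) * ∑ a, (ε a)^2 = C, and max_a ε a = √(C/(m-1)). -/
theorem max_error_lower_bound_tight (m : ℕ) (hm : 2 ≤ m) (C : ℝ) (hC : 0 < C) :
    ∃ ε : Fin m → ℝ, ∑ a, ε a = 0 ∧ (1 / (m : ℝ)) * ∑ a, (ε a) ^ 2 = C ∧
      (⨆ a, ε a) = Real.sqrt (C / ((m : ℝ) - 1)) := by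
  have hm1 : (1:ℝ) ≤ (m:ℝ) - 1 := by
    have : (2:ℝ) ≤ (m:ℝ) := by exact_mod_cast hm
    linarith
  have hm1pos : (0:ℝ) < (m:ℝ) - 1 := by linarith
  have hmpos : (0:ℝ) < (m:ℝ) := by linarith
  set s : ℝ := Real.sqrt (C / ((m:ℝ) - 1)) with hs
  have hspos : 0 < s := Real.sqrt_pos.2 (div_pos hC hm1pos)
  have hs2 : s ^ 2 = C / ((m:ℝ) - 1) := Real.sq_sqrt (le_of_lt (div_pos hC hm1pos))
  refine ⟨fun a => if (a : ℕ) = 0 then -(((m:ℝ) - 1) * s) else s, ?_, ?_, ?_⟩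
  · simp only [apply_ite (fun x : ℝ => x ^ 2)]
    rw [Finset.sum_ite]
    have hc1 : (Finset.univ.filter (fun a : Fin m => (a:ℕ) = 0)).card = 1 := by
      rw [Finset.card_eq_one]
      refine ⟨⟨0, by omega⟩, ?_⟩
      ext a
      simp [Fin.ext_iff]
    have hc2 : (Finset.univ.filter (fun a : Fin m => ¬ (a:ℕ) = 0)).card = m - 1 := by
      have := Finset.card_filter_add_card_filter_not (s := (Finset.univ : Finset (Fin m)))
        (p := fun a : Fin m => (a:ℕ) = 0)
      simp only [Finset.card_univ, Fintype.card_fin] at this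
      omega
    rw [Finset.sum_const, Finset.sum_const, hc1, hc2]
    have : ((m - 1 : ℕ) : ℝ) = (m:ℝ) - 1 := by
      push_cast [Nat.cast_sub (by omega : 1 ≤ m)]; ring
    simp [this]
  · simp only [apply_ite (fun x : ℝ => x ^ 2)]
    rw [Finset.sum_ite]
    have hc1 : (Finset.univ.filter (fun a : Fin m => (a:ℕ) = 0)).card = 1 := by
      rw [Finset.card_eq_one]
      refine ⟨⟨0, by omega⟩, ?_⟩
      ext a
      simp [Fin.ext_iff]
    have hc2 : (Finset.univ.filter (fun a : Fin m => ¬ (a:ℕ) = 0)).card = m - 1 := by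
      have := Finset.card_filter_add_card_filter_not (s := (Finset.univ : Finset (Fin m)))
        (p := fun a : Fin m => (a:ℕ) = 0)
      simp only [Finset.card_univ, Fintype.card_fin] at this
      omega
    rw [Finset.sum_const, Finset.sum_const, hc1, hc2]
    have hcast : ((m - 1 : ℕ) : ℝ) = (m:ℝ) - 1 := by
      push_cast [Nat.cast_sub (by omega : 1 ≤ m)]; ring
    simp only [one_smul, nsmul_eq_mul, hcast, neg_mul_neg, neg_neg]
    have : (-(((m:ℝ) - 1) * s)) ^ 2 = ((m:ℝ) - 1) ^ 2 * s ^ 2 := by ring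
    rw [this, hs2]
    field_simp
    ring
  · haveI : Nonempty (Fin m) := ⟨⟨0, by omega⟩⟩
    apply le_antisymm
    · apply ciSup_le
      intro a
      by_cases h : (a:ℕ) = 0
      · simp only [h, if_pos]
        nlinarith
      · simp [h]
    · have h1 : (⟨1, by omega⟩ : Fin m).val ≠ 0 := by simp
      have := le_ciSup (f := fun a : Fin m => if (a : ℕ) = 0 then -(((m:ℝ) - 1) * s) else s)
        (Finite.bddAbove_range _) ⟨1, by omega⟩
      simpa [h1] using this
end
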